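/- Let 0 < α < 1. There exists a constant c > 0 such that for every μ ≥ 1, ‖θ₊(·;μ)‖_{L²(0,1)} ≤ c/√μ and ‖θ₋(·;μ)‖_{L²(0,1)} ≤ c/√μ, where θ±(·;μ) denote the functions θ± built from the parameter μ. -/

import Mathlib

open MeasureTheory

/-- The Bessel function of the first kind of real order `ν`. -/
noncomputable def besselJ (ν y : ℝ) : ℝ :=
  ∑' m : ℕ, ((-1) ^ m / (m.factorial * Real.Gamma (m + ν + 1))) *
    (y / 2) ^ (2 * (m : ℝ) + ν)

/-- `θ₊(x;μ) = x^{(1-α)/2} J_{ν_α}((2/(2-α)) μ x^{(2-α)/2})`, `ν_α = (1-α)/(2-α)`. -/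
noncomputable def thetaP (α μ x : ℝ) : ℝ :=
  x ^ ((1 - α) / 2) * besselJ ((1 - α) / (2 - α)) (2 / (2 - α) * μ * x ^ ((2 - α) / 2))

/-- `θ₋(x;μ) = x^{(1-α)/2} J_{-ν_α}((2/(2-α)) μ x^{(2-α)/2})`. -/
noncomputable def thetaM (α μ x : ℝ) : ℝ :=
  x ^ ((1 - α) / 2) * besselJ (-((1 - α) / (2 - α))) (2 / (2 - α) * μ * x ^ ((2 - α) / 2))

/-!
Write `J_σ(y) = (y/2)^σ g(y²/4)` with `g` an entire power series. The function `u = √y J_σ`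
satisfies `u'' = ((σ² - 1/4)/y² - 1) u`, so `(u² + u'²) exp(|σ² - 1/4|/y)` decreases on `[1, ∞)`;
with the power-series bound on `(0, 1]`, valid for `σ ≥ -1/2`, this gives `y J_σ(y)² ≤ K` for all
`y > 0`. For `θ(x) = x^{(1-α)/2} J_σ(B x^{(2-α)/2})` this is `θ(x)² ≤ (K/B) x^{-α/2}`, and
integrating over `(0, 1]` with `B = 2μ/(2-α)` gives `‖θ‖²_{L²(0,1)} ≤ K/μ`.
-/

open Real Set
open scoped Nat

def derivCoeff (c : ℕ → ℝ) (n : ℕ) : ℝ := c (n + 1) * (n + 1)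

noncomputable def powerSum (c : ℕ → ℝ) (x : ℝ) : ℝ := ∑' n, c n * x ^ n

section PowerSeries

variable {c : ℕ → ℝ} {K : ℝ}

lemma abs_derivCoeff_derivCoeff_le (h : ∀ n, |derivCoeff c n| ≤ K * |c n|) (n : ℕ) :
    |derivCoeff (derivCoeff c) n| ≤ K * |derivCoeff c n| := by
  have hn : (0 : ℝ) ≤ n + 1 := by positivity
  calc |derivCoeff (derivCoeff c) n| = |derivCoeff c (n + 1)| * (n + 1) := by
        rw [derivCoeff, abs_mul, abs_of_nonneg hn]
    _ ≤ K * |c (n + 1)| * (n + 1) := by gcongr; exact h (n + 1)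
    _ = K * |derivCoeff c n| := by rw [derivCoeff, abs_mul, abs_of_nonneg hn]; ring

lemma abs_le_of_abs_derivCoeff_le (hK : 0 ≤ K) (h : ∀ n, |derivCoeff c n| ≤ K * |c n|) (n : ℕ) :
    |c n| ≤ |c 0| * K ^ n / n ! := by
  induction n with
  | zero => simp
  | succ n ih =>
    have h' : |c (n + 1)| * (n + 1) ≤ K * |c n| := by
      simpa [derivCoeff, abs_mul, abs_of_nonneg (by positivity : (0 : ℝ) ≤ n + 1)] using h n
    rw [le_div_iff₀ (by positivity), Nat.factorial_succ, Nat.cast_mul, pow_succ]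
    calc |c (n + 1)| * ((n + 1 : ℕ) * n ! : ℝ) = |c (n + 1)| * (n + 1) * n ! := by push_cast; ring
      _ ≤ K * |c n| * n ! := by gcongr
      _ ≤ K * (|c 0| * K ^ n / n !) * n ! := by gcongr
      _ = |c 0| * (K ^ n * K) := by field_simp

lemma summable_abs_mul_pow (hK : 0 ≤ K) (h : ∀ n, |derivCoeff c n| ≤ K * |c n|) (r : ℝ) :
    Summable fun n => |c n| * r ^ n := by
  refine .of_norm_bounded ((summable_pow_div_factorial (K * |r|)).mul_left |c 0|) fun n => ?_
  rw [Real.norm_eq_abs, abs_mul, abs_abs, abs_pow]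
  calc |c n| * |r| ^ n ≤ |c 0| * K ^ n / n ! * |r| ^ n := by
        gcongr; exact abs_le_of_abs_derivCoeff_le hK h n
    _ = |c 0| * ((K * |r|) ^ n / n !) := by rw [mul_pow]; ring

lemma summable_mul_pow (hK : 0 ≤ K) (h : ∀ n, |derivCoeff c n| ≤ K * |c n|) (x : ℝ) :
    Summable fun n => c n * x ^ n :=
  .of_norm (by simpa [abs_mul, abs_pow] using summable_abs_mul_pow hK h |x|)

lemma abs_powerSum_le (hK : 0 ≤ K) (h : ∀ n, |derivCoeff c n| ≤ K * |c n|) {x r : ℝ}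
    (hx : |x| ≤ r) : |powerSum c x| ≤ ∑' n, |c n| * r ^ n := by
  have hs := (summable_mul_pow hK h x).norm
  refine (norm_tsum_le_tsum_norm hs).trans
    (hs.tsum_le_tsum (fun n => ?_) (summable_abs_mul_pow hK h r))
  rw [norm_mul, norm_pow, Real.norm_eq_abs, Real.norm_eq_abs]
  gcongr

lemma hasDerivAt_powerSum (hK : 0 ≤ K) (h : ∀ n, |derivCoeff c n| ≤ K * |c n|) (x : ℝ) :
    HasDerivAt (powerSum c) (powerSum (derivCoeff c) x) x := by
  set R := |x| + 1 with hR
  have hsplit : powerSum c = fun y => c 0 + ∑' n, c (n + 1) * y ^ (n + 1) := by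
    funext y
    simpa [powerSum] using (summable_mul_pow hK h y).tsum_eq_zero_add
  have hterm : ∀ n y, HasDerivAt (fun y => c (n + 1) * y ^ (n + 1)) (derivCoeff c n * y ^ n) y :=
    fun n y => by
      simpa [derivCoeff, mul_comm, mul_assoc, mul_left_comm] using
        (hasDerivAt_pow (n + 1) y).const_mul (c (n + 1))
  have hbound : ∀ n, ∀ y ∈ Ioo (-R) R, ‖derivCoeff c n * y ^ n‖ ≤ |derivCoeff c n| * R ^ n := by
    intro n y hy
    rw [norm_mul, norm_pow, Real.norm_eq_abs, Real.norm_eq_abs]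
    gcongr
    exact (abs_lt.mpr hy).le
  rw [hsplit]
  refine (hasDerivAt_tsum_of_isPreconnected
    (summable_abs_mul_pow hK (abs_derivCoeff_derivCoeff_le h) R) isOpen_Ioo isPreconnected_Ioo
    (fun n y _ => hterm n y) hbound (y₀ := 0) ?_ (by simp) ?_).const_add (c 0)
  · constructor <;> linarith [abs_nonneg x]
  · constructor <;> linarith [neg_abs_le x, le_abs_self x]

lemma hasDerivAt_powerSum_sq_div_four (hK : 0 ≤ K) (h : ∀ n, |derivCoeff c n| ≤ K * |c n|)
    (y : ℝ) :
    HasDerivAt (fun y => powerSum c (y ^ 2 / 4))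
      (powerSum (derivCoeff c) (y ^ 2 / 4) * (y / 2)) y := by
  have hsq : HasDerivAt (fun y : ℝ => y ^ 2 / 4) (y / 2) y := by
    simpa using ((hasDerivAt_pow 2 y).div_const 4).congr_deriv (by ring)
  exact (hasDerivAt_powerSum hK h _).comp y hsq

lemma powerSum_ode {σ : ℝ} (hK : 0 ≤ K) (h : ∀ n, |derivCoeff c n| ≤ K * |c n|)
    (hrec : ∀ n, derivCoeff c n * (n + σ + 1) = -c n) (t : ℝ) :
    t * powerSum (derivCoeff (derivCoeff c)) t + (σ + 1) * powerSum (derivCoeff c) t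
      + powerSum c t = 0 := by
  have h' := abs_derivCoeff_derivCoeff_le h
  have hA : HasSum (fun n => derivCoeff c n * n * t ^ n)
      (t * powerSum (derivCoeff (derivCoeff c)) t) := by
    rw [← hasSum_nat_add_iff' 1, Finset.sum_range_one]
    simp only [Nat.cast_zero, mul_zero, zero_mul, sub_zero]
    refine ((summable_mul_pow hK (abs_derivCoeff_derivCoeff_le h') t).hasSum.mul_left t).congr_fun
      fun n => ?_
    simp only [derivCoeff]
    push_cast
    ring
  have hB := (summable_mul_pow hK h' t).hasSum.mul_left (σ + 1)
  have hC := (summable_mul_pow hK h t).hasSum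
  refine ((hA.add hB).add hC).unique ?_
  convert hasSum_zero using 1
  funext n
  linear_combination t ^ n * hrec n

end PowerSeries

theorem sq_le_mul_exp_of_hasDerivAt {u v : ℝ → ℝ} {a y : ℝ}
    (hu : ∀ z, 1 ≤ z → HasDerivAt u (v z) z)
    (hv : ∀ z, 1 ≤ z → HasDerivAt v ((a / z ^ 2 - 1) * u z) z) (hy : 1 ≤ y) :
    u y ^ 2 ≤ (u 1 ^ 2 + v 1 ^ 2) * exp |a| := by
  set E : ℝ → ℝ := fun z => (u z ^ 2 + v z ^ 2) * exp (|a| / z)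
  have hderiv : ∀ z, 1 ≤ z → HasDerivAt E
      ((2 * a * (u z * v z) - |a| * (u z ^ 2 + v z ^ 2)) / z ^ 2 * exp (|a| / z)) z := by
    intro z hz
    have hz0 : z ≠ 0 := by positivity
    have := (((hu z hz).pow 2).add ((hv z hz).pow 2)).mul
      (((hasDerivAt_inv hz0).const_mul |a|).exp)
    have hEfun : E = (u ^ 2 + v ^ 2) * fun w => exp (|a| * w⁻¹) := by
      funext w; simp only [E, div_eq_mul_inv, Pi.mul_apply, Pi.add_apply, Pi.pow_apply]
    rw [hEfun]
    refine this.congr_deriv ?_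
    simp only [Pi.add_apply, Pi.pow_apply]
    field_simp
    ring
  have hanti : AntitoneOn E (Ici 1) := by
    refine antitoneOn_of_hasDerivWithinAt_nonpos (convex_Ici 1)
      (fun z hz => (hderiv z hz).continuousAt.continuousWithinAt)
      (fun z hz => (hderiv z (interior_subset hz)).hasDerivWithinAt) fun z hz => ?_
    have huv : 2 * a * (u z * v z) ≤ |a| * (u z ^ 2 + v z ^ 2) := by
      rcases le_total 0 a with ha | ha
      · rw [abs_of_nonneg ha]; nlinarith [sq_nonneg (u z - v z)]
      · rw [abs_of_nonpos ha]; nlinarith [sq_nonneg (u z + v z)]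
    exact mul_nonpos_of_nonpos_of_nonneg
      (div_nonpos_of_nonpos_of_nonneg (by linarith) (sq_nonneg z)) (exp_pos _).le
  calc u y ^ 2 ≤ u y ^ 2 + v y ^ 2 := le_add_of_nonneg_right (sq_nonneg _)
    _ ≤ E y := le_mul_of_one_le_right (by positivity) (one_le_exp (by positivity))
    _ ≤ E 1 := hanti self_mem_Ici hy hy
    _ = (u 1 ^ 2 + v 1 ^ 2) * exp |a| := by simp [E]

noncomputable def besselCoeff (σ : ℝ) (m : ℕ) : ℝ := (-1) ^ m / (m ! * Gamma (m + σ + 1))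

section Bessel

variable {σ : ℝ}

lemma derivCoeff_besselCoeff_mul (hσ : -1 < σ) (n : ℕ) :
    derivCoeff (besselCoeff σ) n * (n + σ + 1) = -besselCoeff σ n := by
  have harg : (n : ℝ) + σ + 1 ≠ 0 := by linarith [(n.cast_nonneg : (0 : ℝ) ≤ n)]
  have hGamma : Gamma ((n + 1 : ℕ) + σ + 1) = (n + σ + 1) * Gamma (n + σ + 1) := by
    rw [← Gamma_add_one harg]; push_cast; ring_nf
  have hG : Gamma (n + σ + 1) ≠ 0 :=
    (Gamma_pos_of_pos (by linarith [(n.cast_nonneg : (0 : ℝ) ≤ n)])).ne'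
  simp only [derivCoeff, besselCoeff, hGamma, Nat.factorial_succ, Nat.cast_mul, pow_succ]
  field_simp
  push_cast
  ring

lemma abs_derivCoeff_besselCoeff_le (hσ : -1 < σ) (n : ℕ) :
    |derivCoeff (besselCoeff σ) n| ≤ (σ + 1)⁻¹ * |besselCoeff σ n| := by
  have hpos : (0 : ℝ) < n + σ + 1 := by linarith [(n.cast_nonneg : (0 : ℝ) ≤ n)]
  have h := congrArg abs (derivCoeff_besselCoeff_mul hσ n)
  rw [abs_mul, abs_neg, abs_of_pos hpos] at h
  rw [inv_mul_eq_div, le_div_iff₀ (by linarith), ← h]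
  gcongr
  linarith [(n.cast_nonneg : (0 : ℝ) ≤ n)]

lemma besselJ_eq_rpow_mul_powerSum {y : ℝ} (hy : 0 < y) :
    besselJ σ y = (y / 2) ^ σ * powerSum (besselCoeff σ) (y ^ 2 / 4) := by
  rw [besselJ, powerSum, ← tsum_mul_left]
  congr 1
  funext m
  rw [rpow_add (by positivity), show 2 * (m : ℝ) = (2 * m : ℕ) by push_cast; ring, rpow_natCast,
    pow_mul, besselCoeff]
  ring

/-- `√y · J_σ(y)`; it satisfies `u'' = ((σ² - 1/4) / y² - 1) u`. -/
noncomputable def besselNormal (σ y : ℝ) : ℝ :=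
  2 ^ (-σ) * (y ^ (σ + 1 / 2) * powerSum (besselCoeff σ) (y ^ 2 / 4))

noncomputable def besselNormalDeriv (σ y : ℝ) : ℝ :=
  2 ^ (-σ) * ((σ + 1 / 2) * y ^ (σ - 1 / 2) * powerSum (besselCoeff σ) (y ^ 2 / 4)
    + 1 / 2 * y ^ (σ + 3 / 2) * powerSum (derivCoeff (besselCoeff σ)) (y ^ 2 / 4))

lemma mul_besselJ_sq {y : ℝ} (hy : 0 < y) : y * besselJ σ y ^ 2 = besselNormal σ y ^ 2 := by
  have hsqrt : (y ^ (1 / 2 : ℝ)) ^ 2 = y := by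
    rw [← rpow_natCast, ← rpow_mul hy.le]; norm_num
  rw [besselJ_eq_rpow_mul_powerSum hy, besselNormal, div_rpow hy.le zero_le_two, rpow_add hy,
    rpow_neg zero_le_two]
  linear_combination (-(y ^ σ / 2 ^ σ * powerSum (besselCoeff σ) (y ^ 2 / 4)) ^ 2) * hsqrt

lemma hasDerivAt_besselNormal (hσ : -1 < σ) {y : ℝ} (hy : 0 < y) :
    HasDerivAt (besselNormal σ) (besselNormalDeriv σ y) y := by
  have hK : 0 ≤ (σ + 1)⁻¹ := inv_nonneg.mpr (by linarith)
  have hg := hasDerivAt_powerSum_sq_div_four hK (abs_derivCoeff_besselCoeff_le hσ) y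
  have hpow := hasDerivAt_rpow_const (p := σ + 1 / 2) (Or.inl hy.ne')
  refine ((hpow.mul hg).const_mul _).congr_deriv ?_
  rw [besselNormalDeriv, show σ + 1 / 2 - 1 = σ - 1 / 2 by ring,
    show σ + 3 / 2 = σ + 1 / 2 + 1 by ring, rpow_add_one hy.ne']
  ring

lemma hasDerivAt_besselNormalDeriv (hσ : -1 < σ) {y : ℝ} (hy : 0 < y) :
    HasDerivAt (besselNormalDeriv σ) (((σ ^ 2 - 1 / 4) / y ^ 2 - 1) * besselNormal σ y) y := by
  have hK : 0 ≤ (σ + 1)⁻¹ := inv_nonneg.mpr (by linarith)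
  have h := abs_derivCoeff_besselCoeff_le hσ
  have hg := hasDerivAt_powerSum_sq_div_four hK h y
  have hg' := hasDerivAt_powerSum_sq_div_four hK (abs_derivCoeff_derivCoeff_le h) y
  have hode := powerSum_ode hK h (derivCoeff_besselCoeff_mul hσ) (y ^ 2 / 4)
  have h1 := hasDerivAt_rpow_const (p := σ - 1 / 2) (Or.inl hy.ne')
  have h2 := hasDerivAt_rpow_const (p := σ + 3 / 2) (Or.inl hy.ne')
  refine ((((h1.const_mul (σ + 1 / 2)).mul hg).add ((h2.const_mul (1 / 2)).mul hg')).const_mul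
    _).congr_deriv ?_
  have e : ∀ k : ℕ, y ^ (σ - 3 / 2 + k) = y ^ (σ - 3 / 2) * y ^ k := fun k => by
    rw [rpow_add hy, rpow_natCast]
  rw [besselNormal, show σ - 1 / 2 - 1 = σ - 3 / 2 by ring,
    show σ - 1 / 2 = σ - 3 / 2 + (1 : ℕ) by push_cast; ring,
    show σ + 3 / 2 - 1 = σ - 3 / 2 + (2 : ℕ) by push_cast; ring,
    show σ + 1 / 2 = σ - 3 / 2 + (2 : ℕ) by push_cast; ring,
    show σ + 3 / 2 = σ - 3 / 2 + (3 : ℕ) by push_cast; ring, e, e, e]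
  have hy2 : (σ ^ 2 - 1 / 4) / y ^ 2 * y ^ 2 = σ ^ 2 - 1 / 4 := div_mul_cancel₀ _ (by positivity)
  linear_combination (2 ^ (-σ) * y ^ (σ - 3 / 2) * y ^ 2) * hode
    - (2 ^ (-σ) * y ^ (σ - 3 / 2) * powerSum (besselCoeff σ) (y ^ 2 / 4)) * hy2

lemma abs_besselNormal_le (hσ : -1 / 2 ≤ σ) {y : ℝ} (hy0 : 0 < y) (hy1 : y ≤ 1) :
    |besselNormal σ y| ≤ 2 ^ (-σ) * ∑' n, |besselCoeff σ n| * (1 / 4) ^ n := by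
  have hK : 0 ≤ (σ + 1)⁻¹ := inv_nonneg.mpr (by linarith)
  have hg := abs_powerSum_le hK (abs_derivCoeff_besselCoeff_le (by linarith))
    (x := y ^ 2 / 4) (r := 1 / 4) (by rw [abs_of_nonneg (by positivity)]; nlinarith)
  have hpow : y ^ (σ + 1 / 2) ≤ 1 := rpow_le_one hy0.le hy1 (by linarith)
  rw [besselNormal, abs_mul, abs_of_pos (by positivity), abs_mul,
    abs_of_pos (rpow_pos_of_pos hy0 _)]
  gcongr
  calc y ^ (σ + 1 / 2) * |powerSum (besselCoeff σ) (y ^ 2 / 4)|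
      ≤ 1 * ∑' n, |besselCoeff σ n| * (1 / 4) ^ n := by gcongr
    _ = ∑' n, |besselCoeff σ n| * (1 / 4) ^ n := one_mul _

theorem exists_mul_besselJ_sq_le (hσ : -1 / 2 ≤ σ) :
    ∃ K, ∀ y, 0 < y → y * besselJ σ y ^ 2 ≤ K := by
  set S := 2 ^ (-σ) * ∑' n, |besselCoeff σ n| * (1 / 4) ^ n
  refine ⟨max (S ^ 2) ((besselNormal σ 1 ^ 2 + besselNormalDeriv σ 1 ^ 2) * exp |σ ^ 2 - 1 / 4|),
    fun y hy => ?_⟩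
  rw [mul_besselJ_sq hy]
  rcases le_total y 1 with hy1 | hy1
  · exact le_max_of_le_left (sq_le_sq' (abs_le.mp (abs_besselNormal_le hσ hy hy1)).1
      (abs_le.mp (abs_besselNormal_le hσ hy hy1)).2)
  · exact le_max_of_le_right (sq_le_mul_exp_of_hasDerivAt
      (fun z hz => hasDerivAt_besselNormal (by linarith) (by linarith))
      (fun z hz => hasDerivAt_besselNormalDeriv (by linarith) (by linarith)) hy1)

end Bessel

theorem integral_sq_rpow_mul_comp_le {f : ℝ → ℝ} {K α μ : ℝ} (hα : α < 2) (hμ : 0 < μ)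
    (hf : ∀ y, 0 < y → y * f y ^ 2 ≤ K) :
    ∫ x in (0 : ℝ)..1, (x ^ ((1 - α) / 2) * f (2 / (2 - α) * μ * x ^ ((2 - α) / 2))) ^ 2
      ≤ K / μ := by
  have h2α : 0 < 2 - α := by linarith
  set B := 2 / (2 - α) * μ
  have hB : 0 < B := by positivity
  have hpt : ∀ x ∈ Ioc (0 : ℝ) 1,
      (x ^ ((1 - α) / 2) * f (B * x ^ ((2 - α) / 2))) ^ 2 ≤ K / B * x ^ (-α / 2) := by
    rintro x ⟨hx, -⟩
    have hy : 0 < B * x ^ ((2 - α) / 2) := by positivity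
    have hx2 : (x ^ ((1 - α) / 2)) ^ 2 = x ^ (1 - α) := by
      rw [← rpow_natCast, ← rpow_mul hx.le]; norm_num
    calc (x ^ ((1 - α) / 2) * f (B * x ^ ((2 - α) / 2))) ^ 2
        = x ^ (1 - α) / (B * x ^ ((2 - α) / 2))
          * (B * x ^ ((2 - α) / 2) * f (B * x ^ ((2 - α) / 2)) ^ 2) := by
          rw [mul_pow, hx2]; field_simp
      _ ≤ x ^ (1 - α) / (B * x ^ ((2 - α) / 2)) * K := by gcongr; exact hf _ hy
      _ = K / B * (x ^ (1 - α) / x ^ ((2 - α) / 2)) := by ring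
      _ = K / B * x ^ (-α / 2) := by rw [← rpow_sub hx]; ring_nf
  have hint : IntegrableOn (fun x : ℝ => K / B * x ^ (-α / 2)) (Ioc 0 1) :=
    (intervalIntegrable_iff_integrableOn_Ioc_of_le zero_le_one).mp
      ((intervalIntegral.intervalIntegrable_rpow' (by linarith)).const_mul _)
  calc ∫ x in (0 : ℝ)..1, (x ^ ((1 - α) / 2) * f (B * x ^ ((2 - α) / 2))) ^ 2
      ≤ ∫ x in (0 : ℝ)..1, K / B * x ^ (-α / 2) := by
        simp only [intervalIntegral.integral_of_le zero_le_one]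
        exact integral_mono_of_nonneg (ae_of_all _ fun _ => sq_nonneg _) hint
          ((ae_restrict_iff' measurableSet_Ioc).mpr (ae_of_all _ hpt))
    _ = K / μ := by
        rw [intervalIntegral.integral_const_mul, integral_rpow (Or.inl (by linarith)),
          one_rpow, zero_rpow (by linarith)]
        field_simp
        ring

/-- Uniform `L²(0,1)` bounds: there is `c > 0` with
`‖θ₊(·;μ)‖_{L²(0,1)} ≤ c/√μ` and `‖θ₋(·;μ)‖_{L²(0,1)} ≤ c/√μ` for every `μ ≥ 1`. -/
theorem stmt15 (α : ℝ) (hα0 : 0 < α) (hα1 : α < 1) :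
    ∃ c > 0, ∀ μ : ℝ, 1 ≤ μ →
      Real.sqrt (∫ x in (0:ℝ)..1, (thetaP α μ x) ^ 2) ≤ c / Real.sqrt μ ∧
      Real.sqrt (∫ x in (0:ℝ)..1, (thetaM α μ x) ^ 2) ≤ c / Real.sqrt μ := by
  have h2α : 0 < 2 - α := by linarith
  have hν : 0 ≤ (1 - α) / (2 - α) := div_nonneg (by linarith) h2α.le
  have hν' : (1 - α) / (2 - α) ≤ 1 / 2 := by rw [div_le_iff₀ h2α]; linarith
  obtain ⟨KP, hKP⟩ := exists_mul_besselJ_sq_le (σ := (1 - α) / (2 - α)) (by linarith)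
  obtain ⟨KM, hKM⟩ := exists_mul_besselJ_sq_le (σ := -((1 - α) / (2 - α))) (by linarith)
  refine ⟨max √KP √KM + 1, by positivity, fun μ hμ => ?_⟩
  have hμ0 : 0 < μ := by linarith
  have hsqrt : ∀ I K : ℝ, I ≤ K / μ → √K ≤ max √KP √KM → √I ≤ (max √KP √KM + 1) / √μ :=
    fun I K hI hK => calc √I ≤ √(K / μ) := sqrt_le_sqrt hI
      _ = √K / √μ := sqrt_div' K hμ0.le
      _ ≤ (max √KP √KM + 1) / √μ := by gcongr; linarith
  exact ⟨hsqrt _ _ (integral_sq_rpow_mul_comp_le (by linarith) hμ0 hKP) (le_max_left _ _),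
    hsqrt _ _ (integral_sq_rpow_mul_comp_le (by linarith) hμ0 hKM) (le_max_right _ _)⟩
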